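/- arXiv:1805.04744 — 2 statements merged into one kernel-verified Lean document; each statement's English description precedes it below -/
import Mathlib

section
/- Let β > 1 and let ε(1,β) be the sequence of digits of the β-expansion of 1. Then for every k ≥ 1, the shifted sequence σ^k ε(1,β) is lexicographically strictly less than ε(1,β), where σ denotes the one-sided shift. -/
open Filter MeasureTheory Set

noncomputable def betaT (β : ℝ) (x : ℝ) : ℝ := β * x - ⌊β * x⌋

noncomputable def eps (β x : ℝ) (n : ℕ) : ℤ := ⌊β * (betaT β)^[n - 1] x⌋

noncomputable def runLen (β x : ℝ) (n : ℕ) : ℕ :=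
  sSup {j | ∃ i, i + j ≤ n ∧ ∀ k < j, eps β x (i + k + 1) = 0}

def isAdmissible (β : ℝ) (n : ℕ) (ω : ℕ → ℤ) : Prop :=
  ∃ x ∈ Set.Ico (0 : ℝ) 1, ∀ k < n, eps β x (k + 1) = ω k

def cylinder (β : ℝ) (n : ℕ) (ω : ℕ → ℤ) : Set ℝ :=
  {x | x ∈ Set.Ico (0 : ℝ) 1 ∧ ∀ k < n, eps β x (k + 1) = ω k}

def isFull (β : ℝ) (n : ℕ) (ω : ℕ → ℤ) : Prop :=
  MeasureTheory.volume (cylinder β n ω) = ENNReal.ofReal (β ^ (-(n : ℤ)))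

open Classical in
noncomputable def epsStar (β : ℝ) : ℕ → ℤ :=
  if h : ∃ m, 1 ≤ m ∧ eps β 1 m ≠ 0 ∧ ∀ k, m < k → eps β 1 k = 0 then
    fun n =>
      if (n - 1) % Nat.find h + 1 = Nat.find h then eps β 1 (Nat.find h) - 1
      else eps β 1 ((n - 1) % Nat.find h + 1)
  else eps β 1

def lexLt (u v : ℕ → ℤ) : Prop := ∃ j, (∀ k < j, u k = v k) ∧ u j < v j

def lexLe (u v : ℕ → ℤ) : Prop := lexLt u v ∨ u = v

noncomputable def vbeta (β x : ℝ) : ℝ :=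
  sSup {v | 0 ≤ v ∧ ∃ᶠ n : ℕ in atTop, (betaT β)^[n] x ≤ β ^ (-((n : ℝ) * v))}

noncomputable def hatv (β x : ℝ) : ℝ :=
  sSup {v | 0 ≤ v ∧ ∀ᶠ N : ℕ in atTop, ∃ n, 1 ≤ n ∧ n ≤ N ∧ (betaT β)^[n] x ≤ β ^ (-(v * (N : ℝ)))}

/-!
While the first `n` digits of two points `x < y` agree, `T_β` acts on both by the same affine map
`t ↦ β t - d`, so `T_β^n y - T_β^n x = β^n (y - x)`. As this gap cannot outgrow `[0, 1]`, the digits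
eventually differ, and at the first difference the larger point has the larger digit: the digit
sequence is strictly lexicographically increasing on `[0, 1]`. The shifted sequence `σ^k ε(1, β)` is
the digit sequence of `T_β^k 1`, which lies in `[0, 1)`, hence it is smaller than that of `1`.
-/

lemma eps_succ (β x : ℝ) (n : ℕ) : eps β x (n + 1) = ⌊β * (betaT β)^[n] x⌋ := rfl

lemma eps_succ_add (β x : ℝ) (n k : ℕ) :
    eps β x (n + 1 + k) = eps β ((betaT β)^[k] x) (n + 1) := by
  rw [eps_succ, ← Function.iterate_add_apply, eps, Nat.add_right_comm, Nat.add_sub_cancel]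

lemma betaT_iterate_succ_mem_Ico (β x : ℝ) (n : ℕ) : (betaT β)^[n + 1] x ∈ Ico 0 1 := by
  rw [Function.iterate_succ_apply']
  exact ⟨Int.fract_nonneg _, Int.fract_lt_one _⟩

section BetaExpansion

variable {β : ℝ}

lemma betaT_iterate_mem_Icc {x : ℝ} (hx : x ∈ Icc 0 1) (n : ℕ) : (betaT β)^[n] x ∈ Icc 0 1 := by
  cases n with
  | zero => exact hx
  | succ n => exact Ico_subset_Icc_self (betaT_iterate_succ_mem_Ico β x n)

lemma betaT_iterate_sub_of_eps_eq {x y : ℝ} {n : ℕ}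
    (h : ∀ k < n, eps β x (k + 1) = eps β y (k + 1)) :
    (betaT β)^[n] y - (betaT β)^[n] x = β ^ n * (y - x) := by
  induction n with
  | zero => simp
  | succ n ih =>
    have hgap := ih fun k hk => h k (Nat.lt_succ_of_lt hk)
    have hdigit : ⌊β * (betaT β)^[n] x⌋ = ⌊β * (betaT β)^[n] y⌋ := h n (Nat.lt_succ_self n)
    simp only [Function.iterate_succ_apply', betaT, hdigit]
    linear_combination β * hgap

lemma exists_eps_ne_of_lt (hβ : 1 < β) {x y : ℝ} (hx : x ∈ Icc 0 1) (hy : y ∈ Icc 0 1)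
    (hxy : x < y) : ∃ n, eps β x (n + 1) ≠ eps β y (n + 1) := by
  by_contra! hall
  obtain ⟨n, hn⟩ := pow_unbounded_of_one_lt (1 / (y - x)) hβ
  rw [div_lt_iff₀ (sub_pos.mpr hxy)] at hn
  have hgap := betaT_iterate_sub_of_eps_eq (n := n) fun k _ => hall k
  have hTx := (betaT_iterate_mem_Icc (β := β) hx n).1
  have hTy := (betaT_iterate_mem_Icc (β := β) hy n).2
  linarith

lemma eps_le_of_lt_of_eps_eq (hβ : 0 < β) {x y : ℝ} (hxy : x < y) {n : ℕ}
    (h : ∀ k < n, eps β x (k + 1) = eps β y (k + 1)) : eps β x (n + 1) ≤ eps β y (n + 1) := by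
  have hgap := betaT_iterate_sub_of_eps_eq h
  have hlt : (betaT β)^[n] x < (betaT β)^[n] y := by
    nlinarith [pow_pos hβ n]
  exact Int.floor_le_floor (mul_le_mul_of_nonneg_left hlt.le hβ.le)

theorem lexLt_eps_of_lt (hβ : 1 < β) {x y : ℝ} (hx : x ∈ Icc 0 1) (hy : y ∈ Icc 0 1)
    (hxy : x < y) : lexLt (fun n => eps β x (n + 1)) (fun n => eps β y (n + 1)) := by
  classical
  have hne := exists_eps_ne_of_lt hβ hx hy hxy
  have hagree : ∀ k < Nat.find hne, eps β x (k + 1) = eps β y (k + 1) :=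
    fun k hk => not_not.mp (Nat.find_min hne hk)
  exact ⟨Nat.find hne, hagree,
    (eps_le_of_lt_of_eps_eq (zero_lt_one.trans hβ) hxy hagree).lt_of_ne (Nat.find_spec hne)⟩

end BetaExpansion

theorem stmt10 (β : ℝ) (hβ : 1 < β) :
    ∀ k : ℕ, 1 ≤ k →
      lexLt (fun n => eps β 1 (n + 1 + k)) (fun n => eps β 1 (n + 1)) := by
  intro k hk
  obtain ⟨m, rfl⟩ : ∃ m, k = m + 1 := ⟨k - 1, by omega⟩
  have hTm := betaT_iterate_succ_mem_Ico β 1 m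
  simp only [eps_succ_add]
  exact lexLt_eps_of_lt hβ (Ico_subset_Icc_self hTm) (right_mem_Icc.mpr zero_le_one) hTm.2
end

section
/- Let β > 1. If ω and ω' are full admissible words (of lengths n and m), then their concatenation ω * ω' is a full admissible word of length n + m. Moreover, for every ℓ ≥ 1 the all-zeros word 0^ℓ is full, and if ω is full then ω * 0^ℓ is full. -/
open Filter MeasureTheory Set

/-!
On the cylinder of a word `ω` of length `n`, the map `T_β^n` is the affine map
`x ↦ β^n (x - a)`, where `a = ∑ ω_k β^{-(k+1)}`, so the cylinder lies in `[a, a + β^{-n})` and the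
cylinder of `ω * ω'` is the part of the cylinder of `ω` that this affine map sends into the cylinder
of `ω'`. If `ω` is full, its cylinder fills `[a, a + β^{-n})` up to a null set, and the affine map
scales measure by `β^{-n}`; hence `|I(ω * ω')| = β^{-n} |I(ω')|`. The zero words are then full by
induction, starting from `I_1(0) = [0, β⁻¹)`.
-/

def concatWord (n : ℕ) (ω ω' : ℕ → ℤ) : ℕ → ℤ := fun k => if k < n then ω k else ω' (k - n)

noncomputable def wordValue (β : ℝ) (n : ℕ) (ω : ℕ → ℤ) : ℝ :=
  ∑ k ∈ Finset.range n, (ω k : ℝ) * (β ^ (k + 1))⁻¹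

lemma wordValue_congr {β : ℝ} {n : ℕ} {ω ω' : ℕ → ℤ} (h : ∀ k < n, ω k = ω' k) :
    wordValue β n ω = wordValue β n ω' :=
  Finset.sum_congr rfl fun k hk => by rw [h k (Finset.mem_range.mp hk)]

lemma betaT_mem_Ico (β x : ℝ) : betaT β x ∈ Ico (0 : ℝ) 1 :=
  ⟨Int.fract_nonneg _, Int.fract_lt_one _⟩

lemma iterate_betaT_mem_Ico {β x : ℝ} (hx : x ∈ Ico (0 : ℝ) 1) :
    ∀ n, (betaT β)^[n] x ∈ Ico (0 : ℝ) 1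
  | 0 => hx
  | _ + 1 => by rw [Function.iterate_succ_apply']; exact betaT_mem_Ico _ _

lemma eps_add (β x : ℝ) (n k : ℕ) :
    eps β x (n + k + 1) = eps β ((betaT β)^[n] x) (k + 1) := by
  simp [eps, add_comm n k, Function.iterate_add_apply]

lemma measurable_betaT (β : ℝ) : Measurable (betaT β) :=
  measurable_fract.comp (measurable_const.mul measurable_id)

lemma measurableSet_cylinder (β : ℝ) (n : ℕ) (ω : ℕ → ℤ) :
    MeasurableSet (cylinder β n ω) := by
  have hmeas (m : ℕ) : Measurable fun x => eps β x m :=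
    (measurable_const.mul ((measurable_betaT β).iterate (m - 1))).floor
  have hcyl : cylinder β n ω = Ico 0 1 ∩ ⋂ k ∈ Finset.range n, {x | eps β x (k + 1) = ω k} := by
    ext x
    simp [_root_.cylinder]
  rw [hcyl]
  exact measurableSet_Ico.inter <| .biInter (to_countable _) fun k _ =>
    hmeas (k + 1) (measurableSet_singleton (ω k))

lemma iterate_betaT_eq {β : ℝ} (hβ : β ≠ 0) (x : ℝ) (n : ℕ) :
    (betaT β)^[n] x = β ^ n * (x - wordValue β n fun k => eps β x (k + 1)) := by
  induction n with
  | zero => simp [wordValue]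
  | succ n ih =>
    have hdigit : ⌊β * (betaT β)^[n] x⌋ = eps β x (n + 1) := by simp [eps]
    rw [Function.iterate_succ_apply', betaT, hdigit, ih]
    simp only [wordValue, Finset.sum_range_succ]
    field_simp
    ring

lemma iterate_betaT_eq_of_mem_cylinder {β : ℝ} (hβ : β ≠ 0) {n : ℕ} {ω : ℕ → ℤ} {x : ℝ}
    (hx : x ∈ cylinder β n ω) : (betaT β)^[n] x = β ^ n * (x - wordValue β n ω) := by
  rw [iterate_betaT_eq hβ, wordValue_congr hx.2]

lemma preimage_affine_Ico {c : ℝ} (hc : 0 < c) (a : ℝ) :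
    (fun x => c * (x - a)) ⁻¹' Ico 0 1 = Ico a (a + c⁻¹) := by
  ext x
  simp only [mem_preimage, mem_Ico, mul_nonneg_iff_of_pos_left hc, sub_nonneg,
    ← lt_div_iff₀' hc, one_div, ← sub_lt_iff_lt_add']

lemma volume_preimage_affine {c : ℝ} (hc : 0 < c) (a : ℝ) (s : Set ℝ) :
    volume ((fun x => c * (x - a)) ⁻¹' s) = ENNReal.ofReal c⁻¹ * volume s := by
  change volume ((· - a) ⁻¹' ((c * ·) ⁻¹' s)) = _
  simp_rw [sub_eq_add_neg]
  rw [measure_preimage_add_right, Real.volume_preimage_mul_left hc.ne', abs_of_pos (inv_pos.2 hc)]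

lemma cylinder_subset_Ico {β : ℝ} (hβ : 0 < β) (n : ℕ) (ω : ℕ → ℤ) :
    cylinder β n ω ⊆ Ico (wordValue β n ω) (wordValue β n ω + (β ^ n)⁻¹) := by
  intro x hx
  rw [← preimage_affine_Ico (pow_pos hβ n), mem_preimage,
    ← iterate_betaT_eq_of_mem_cylinder hβ.ne' hx]
  exact iterate_betaT_mem_Ico hx.1 n

lemma cylinder_concatWord (β : ℝ) (n m : ℕ) (ω ω' : ℕ → ℤ) :
    cylinder β (n + m) (concatWord n ω ω') =
      cylinder β n ω ∩ (betaT β)^[n] ⁻¹' cylinder β m ω' := by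
  ext x
  simp only [_root_.cylinder, concatWord, mem_inter_iff, mem_preimage]
  constructor
  · rintro ⟨hx, hdigits⟩
    refine ⟨⟨hx, fun k hk => by simpa [hk] using hdigits k (by omega)⟩,
      iterate_betaT_mem_Ico hx n, fun j hj => ?_⟩
    simpa [← eps_add] using hdigits (n + j) (by omega)
  · rintro ⟨⟨hx, hprefix⟩, -, hsuffix⟩
    refine ⟨hx, fun k hk => ?_⟩
    by_cases hkn : k < n
    · simpa [hkn] using hprefix k hkn
    · obtain ⟨j, rfl⟩ := Nat.exists_eq_add_of_le (not_lt.1 hkn)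
      simpa [eps_add] using hsuffix j (by omega)

lemma measure_inter_eq_of_measure_eq {α : Type*} [MeasurableSpace α] {μ : Measure α}
    {s t u : Set α} (hs : NullMeasurableSet s μ) (hst : s ⊆ t) (hμ : μ s = μ t) (ht : μ t ≠ ⊤)
    (hut : u ⊆ t) : μ (s ∩ u) = μ u := by
  rw [measure_congr ((ae_eq_of_subset_of_measure_ge hst hμ.ge hs ht).inter (ae_eq_refl u)),
    inter_eq_right.2 hut]

lemma isFull_iff {β : ℝ} {n : ℕ} {ω : ℕ → ℤ} :
    isFull β n ω ↔ volume (cylinder β n ω) = ENNReal.ofReal (β ^ n)⁻¹ := by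
  rw [isFull, zpow_neg, zpow_natCast]

lemma isFull.concat {β : ℝ} (hβ : 0 < β) {n m : ℕ} {ω ω' : ℕ → ℤ} (hω : isFull β n ω)
    (hω' : isFull β m ω') : isFull β (n + m) (concatWord n ω ω') := by
  rw [isFull_iff] at *
  have hβn : 0 < β ^ n := pow_pos hβ n
  set g : ℝ → ℝ := fun x => β ^ n * (x - wordValue β n ω)
  have hcyl : cylinder β (n + m) (concatWord n ω ω') = cylinder β n ω ∩ g ⁻¹' cylinder β m ω' := by
    rw [cylinder_concatWord]
    ext x
    simp only [mem_inter_iff, mem_preimage, and_congr_right_iff]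
    intro hx
    rw [iterate_betaT_eq_of_mem_cylinder hβ.ne' hx]
  have hI : g ⁻¹' Ico 0 1 = Ico (wordValue β n ω) (wordValue β n ω + (β ^ n)⁻¹) :=
    preimage_affine_Ico hβn _
  rw [hcyl, measure_inter_eq_of_measure_eq (measurableSet_cylinder β n ω).nullMeasurableSet
      (cylinder_subset_Ico hβ n ω) (by rw [hω, Real.volume_Ico, add_sub_cancel_left])
      measure_Ico_lt_top.ne (hI ▸ preimage_mono fun _ hx => hx.1),
    volume_preimage_affine hβn, hω', ← ENNReal.ofReal_mul (by positivity), ← mul_inv, ← pow_add]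

lemma isFull.isAdmissible {β : ℝ} (hβ : 0 < β) {n : ℕ} {ω : ℕ → ℤ} (hω : isFull β n ω) :
    isAdmissible β n ω := by
  have hpos : volume (cylinder β n ω) ≠ 0 := by
    rw [isFull_iff.1 hω]
    exact (ENNReal.ofReal_pos.2 (by positivity)).ne'
  exact nonempty_of_measure_ne_zero hpos

lemma cylinder_one_zero {β : ℝ} (hβ : 1 ≤ β) : cylinder β 1 (fun _ => 0) = Ico 0 β⁻¹ := by
  have hβ0 : 0 < β := one_pos.trans_le hβ
  ext x
  simp only [_root_.cylinder, Nat.lt_one_iff, forall_eq, eps, mem_ofPred_eq, mem_Ico,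
    Int.floor_eq_zero_iff, mul_nonneg_iff_of_pos_left hβ0,
    ← lt_div_iff₀' hβ0, one_div]
  constructor
  · rintro ⟨⟨hx0, -⟩, -, hx⟩
    exact ⟨hx0, hx⟩
  · rintro ⟨hx0, hx⟩
    exact ⟨⟨hx0, hx.trans_le (inv_le_one_of_one_le₀ hβ)⟩, hx0, hx⟩

lemma isFull_zero {β : ℝ} (hβ : 1 ≤ β) : ∀ ℓ, isFull β ℓ (fun _ => 0)
  | 0 => by
    rw [isFull_iff, show cylinder β 0 (fun _ => 0) = Ico 0 1 by ext; simp [_root_.cylinder]]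
    simp
  | ℓ + 1 => by
    have hone : isFull β 1 (fun _ => 0) := by
      rw [isFull_iff, cylinder_one_zero hβ, Real.volume_Ico, sub_zero, pow_one]
    have hconcat := (isFull_zero hβ ℓ).concat (one_pos.trans_le hβ) hone
    rwa [show concatWord ℓ (fun _ => 0) (fun _ => 0) = fun _ => 0 from
      funext fun k => ite_self 0] at hconcat

theorem stmt15 (β : ℝ) (hβ : 1 < β) :
    (∀ (n m : ℕ) (ω ω' : ℕ → ℤ), isAdmissible β n ω → isFull β n ω →
      isAdmissible β m ω' → isFull β m ω' →
      isAdmissible β (n + m) (fun k => if k < n then ω k else ω' (k - n)) ∧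
        isFull β (n + m) (fun k => if k < n then ω k else ω' (k - n))) ∧
    (∀ ℓ : ℕ, 1 ≤ ℓ → isFull β ℓ (fun _ => 0)) ∧
    (∀ (n ℓ : ℕ) (ω : ℕ → ℤ), 1 ≤ ℓ → isAdmissible β n ω → isFull β n ω →
      isFull β (n + ℓ) (fun k => if k < n then ω k else 0)) := by
  have hβ0 : 0 < β := one_pos.trans hβ
  refine ⟨fun n m ω ω' _ hω _ hω' => ?_, fun ℓ _ => isFull_zero hβ.le ℓ,
    fun n ℓ ω _ _ hω => hω.concat hβ0 (isFull_zero hβ.le ℓ)⟩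
  have hfull := hω.concat hβ0 hω'
  exact ⟨hfull.isAdmissible hβ0, hfull⟩
end
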